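/- Fix k > 0. As μ → 0⁺ (within (0,1)), the PGN(μ,k) distribution converges weakly (in the topology of weak convergence of probability measures on ℝ) to the chi distribution χ_k with k degrees of freedom, i.e. to the measure with density x ↦ x^{k−1} e^{−x²/2} / (2^{k/2−1} Γ(k/2)) on (0,∞). As μ → 1⁻, the PGN(μ,k) distribution converges weakly to the pushforward of χ_k under x ↦ −x. -/

import Mathlib

open MeasureTheory Real Set

/-- Density of the chi-squared distribution with `k` degrees of freedom. -/
noncomputable def chiSqDensity (k : ℝ) (v : ℝ) : ℝ :=
  if 0 < v then v ^ (k / 2 - 1) * Real.exp (-v / 2) / ((2 : ℝ) ^ (k / 2) * Real.Gamma (k / 2))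
  else 0

/-- The Beta function `B(a,b) = Γ(a)Γ(b)/Γ(a+b)`. -/
noncomputable def realBeta (a b : ℝ) : ℝ := Real.Gamma a * Real.Gamma b / Real.Gamma (a + b)

/-- Density of the Beta(2μ, 2(1-μ)) distribution. -/
noncomputable def betaDensity (μ : ℝ) (u : ℝ) : ℝ :=
  if 0 < u ∧ u < 1 then
    u ^ (2 * μ - 1) * (1 - u) ^ (1 - 2 * μ) / realBeta (2 * μ) (2 * (1 - μ))
  else 0

/-- The chi-squared distribution with `k` degrees of freedom, as a measure on ℝ. -/
noncomputable def chiSqMeasure (k : ℝ) : Measure ℝ :=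
  volume.withDensity (fun v => ENNReal.ofReal (chiSqDensity k v))

/-- The Beta(2μ, 2(1-μ)) distribution, as a measure on ℝ. -/
noncomputable def betaMeasure (μ : ℝ) : Measure ℝ :=
  volume.withDensity (fun u => ENNReal.ofReal (betaDensity μ u))

/-- The polar-generalized normal distribution PGN(μ, k): the pushforward of
(chi-squared k) ⊗ (Beta(2μ, 2(1-μ))) under `(v, u) ↦ √v · cos (π u)`. -/
noncomputable def PGN (μ k : ℝ) : Measure ℝ :=
  Measure.map (fun p : ℝ × ℝ => Real.sqrt p.1 * Real.cos (π * p.2))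
    ((chiSqMeasure k).prod (betaMeasure μ))

/-- The chi distribution with `k` degrees of freedom: the measure on ℝ with density
`x ↦ x^(k-1) e^(-x²/2) / (2^(k/2-1) Γ(k/2))` on `(0, ∞)`. -/
noncomputable def chiMeasure (k : ℝ) : Measure ℝ :=
  volume.withDensity (fun x => ENNReal.ofReal (
    if 0 < x then
      x ^ (k - 1) * Real.exp (-(x ^ 2) / 2) / ((2 : ℝ) ^ (k / 2 - 1) * Real.Gamma (k / 2))
    else 0))

/-!
The Beta(2μ, 2(1-μ)) law lives on (0,1) and has mean μ, so `E|U - c|` tends to zero and it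
converges weakly to the Dirac mass at `c = 0` as `μ → 0` and at `c = 1` as `μ → 1`: against a
bounded `K`-Lipschitz test function the integrals move by at most `K · E|U - c|`. Products with the
fixed χ²_k law and pushforward along the continuous map `(v, u) ↦ √v cos (π u)` preserve weak
convergence, so PGN(μ, k) tends to the law of `√V cos (π c) = ±√V`, and the substitution `v = x²`
identifies the law of `√V` with χ_k.
-/

open Filter Topology BoundedContinuousFunction

lemma integral_withDensity_ofReal {X : Type*} [MeasurableSpace X] {μ : Measure X} {d : X → ℝ}
    (hd : Measurable d) (hd0 : ∀ x, 0 ≤ d x) (g : X → ℝ) :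
    ∫ x, g x ∂μ.withDensity (fun x => ENNReal.ofReal (d x)) = ∫ x, d x * g x ∂μ := by
  rw [integral_withDensity_eq_integral_toReal_smul (by fun_prop)
    (ae_of_all _ fun _ => ENNReal.ofReal_lt_top)]
  simp_rw [ENNReal.toReal_ofReal (hd0 _), smul_eq_mul]

theorem tendsto_diracProba_of_tendsto_integral_dist {ι Ω : Type*} [MeasurableSpace Ω]
    [PseudoMetricSpace Ω] [OpensMeasurableSpace Ω] [SecondCountableTopology Ω]
    {L : Filter ι} [L.IsCountablyGenerated] {ν : ι → ProbabilityMeasure Ω} {x : Ω}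
    (hint : ∀ i, Integrable (dist · x) (ν i))
    (h : Tendsto (fun i => ∫ ω, dist ω x ∂(ν i)) L (𝓝 0)) :
    Tendsto ν L (𝓝 (diracProba x)) := by
  rw [tendsto_iff_forall_lipschitz_integral_tendsto]
  rintro f ⟨C, hC⟩ ⟨K, hK⟩
  have hf : ∀ i, Integrable f (ν i) := fun i =>
    .of_bound hK.continuous.aestronglyMeasurable (‖f x‖ + C) <| ae_of_all _ fun ω =>
      (norm_le_norm_add_norm_sub' (f ω) (f x)).trans (by rw [← dist_eq_norm]; linarith [hC ω x])
  have hbound : ∀ i, ‖∫ ω, f ω ∂(ν i) - f x‖ ≤ K * ∫ ω, dist ω x ∂(ν i) := fun i => calc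
    ‖∫ ω, f ω ∂(ν i) - f x‖ = ‖∫ ω, (f ω - f x) ∂(ν i)‖ := by
      rw [integral_sub (hf i) (integrable_const _), integral_const, probReal_univ, one_smul]
    _ ≤ ∫ ω, ‖f ω - f x‖ ∂(ν i) := norm_integral_le_integral_norm _
    _ ≤ ∫ ω, K * dist ω x ∂(ν i) :=
      integral_mono_of_nonneg (ae_of_all _ fun _ => norm_nonneg _) ((hint i).const_mul _)
        (ae_of_all _ fun ω => (dist_eq_norm (f ω) (f x)).symm.trans_le (hK.dist_le_mul ω x))
    _ = K * ∫ ω, dist ω x ∂(ν i) := integral_const_mul _ _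
  have hdirac : ∫ ω, f ω ∂(diracProba x : Measure Ω) = f x :=
    integral_dirac' f x hK.continuous.stronglyMeasurable
  rw [hdirac, tendsto_iff_norm_sub_tendsto_zero]
  exact squeeze_zero (fun _ => norm_nonneg _) hbound (by simpa using h.const_mul (K : ℝ))

namespace ProbabilityTheory

lemma beta_add_one_left {α β : ℝ} (hα : 0 < α) (hβ : 0 < β) :
    beta (α + 1) β = α / (α + β) * beta α β := by
  have hαβ : 0 < α + β := add_pos hα hβ
  have := (Real.Gamma_pos_of_pos hαβ).ne'
  rw [beta, beta, add_right_comm, Real.Gamma_add_one hα.ne', Real.Gamma_add_one hαβ.ne']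
  field_simp

lemma betaPDFReal_mul_self {α β : ℝ} (hα : 0 < α) (hβ : 0 < β) (x : ℝ) :
    betaPDFReal α β x * x = α / (α + β) * betaPDFReal (α + 1) β x := by
  have := (beta_pos hα hβ).ne'
  have := (add_pos hα hβ).ne'
  unfold betaPDFReal
  split_ifs with hx
  · have hx0 := hx.1.ne'
    rw [beta_add_one_left hα hβ, add_sub_cancel_right, Real.rpow_sub_one hx0]
    field_simp
  · simp

lemma betaPDFReal_nonneg {α β : ℝ} (hα : 0 < α) (hβ : 0 < β) (x : ℝ) : 0 ≤ betaPDFReal α β x := by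
  by_cases hx : 0 < x ∧ x < 1
  · exact (betaPDFReal_pos hx.1 hx.2 hα hβ).le
  · rw [betaPDFReal, if_neg hx]

lemma integral_betaMeasure {α β : ℝ} (hα : 0 < α) (hβ : 0 < β) (g : ℝ → ℝ) :
    ∫ x, g x ∂betaMeasure α β = ∫ x, betaPDFReal α β x * g x :=
  integral_withDensity_ofReal (measurable_betaPDFReal α β) (betaPDFReal_nonneg hα hβ) g

lemma integral_id_betaMeasure {α β : ℝ} (hα : 0 < α) (hβ : 0 < β) :
    ∫ x, x ∂betaMeasure α β = α / (α + β) := by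
  have hα1 : 0 < α + 1 := by linarith
  have := isProbabilityMeasureBeta hα1 hβ
  have hone := integral_betaMeasure hα1 hβ (fun _ => (1 : ℝ))
  simp only [integral_const, probReal_univ, one_smul, mul_one] at hone
  simp_rw [integral_betaMeasure hα hβ, betaPDFReal_mul_self hα hβ, integral_const_mul, ← hone,
    mul_one]

end ProbabilityTheory

lemma betaDensity_eq_betaPDFReal (μ : ℝ) :
    betaDensity μ = ProbabilityTheory.betaPDFReal (2 * μ) (2 * (1 - μ)) := by
  ext u
  unfold betaDensity ProbabilityTheory.betaPDFReal
  split_ifs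
  · rw [show 2 * (1 - μ) - 1 = 1 - 2 * μ by ring, realBeta, ProbabilityTheory.beta]
    ring
  · rfl

lemma betaMeasure_eq_betaMeasure_two_mul (μ : ℝ) :
    betaMeasure μ = ProbabilityTheory.betaMeasure (2 * μ) (2 * (1 - μ)) := by
  rw [betaMeasure, betaDensity_eq_betaPDFReal]
  rfl

lemma ae_mem_Ioo_betaMeasure (μ : ℝ) : ∀ᵐ u ∂betaMeasure μ, u ∈ Ioo (0 : ℝ) 1 := by
  rw [betaMeasure, betaDensity_eq_betaPDFReal,
    ae_withDensity_iff (ProbabilityTheory.measurable_betaPDFReal _ _).ennreal_ofReal]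
  refine ae_of_all _ fun u hu => ?_
  by_contra hu'
  rw [mem_Ioo] at hu'
  simp [ProbabilityTheory.betaPDFReal, hu'] at hu

lemma isProbabilityMeasure_betaMeasure {μ : ℝ} (hμ : μ ∈ Ioo (0 : ℝ) 1) :
    IsProbabilityMeasure (betaMeasure μ) := by
  rw [betaMeasure_eq_betaMeasure_two_mul]
  exact ProbabilityTheory.isProbabilityMeasureBeta (by linarith [hμ.1]) (by linarith [hμ.2])

lemma integral_id_betaMeasure {μ : ℝ} (hμ : μ ∈ Ioo (0 : ℝ) 1) : ∫ u, u ∂betaMeasure μ = μ := by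
  rw [betaMeasure_eq_betaMeasure_two_mul, ProbabilityTheory.integral_id_betaMeasure
    (by linarith [hμ.1]) (by linarith [hμ.2])]
  field_simp
  ring

lemma integrable_id_betaMeasure {μ : ℝ} (hμ : μ ∈ Ioo (0 : ℝ) 1) :
    Integrable (fun u => u) (betaMeasure μ) :=
  have := isProbabilityMeasure_betaMeasure hμ
  .of_bound (by fun_prop) 1 <| (ae_mem_Ioo_betaMeasure μ).mono fun u hu => by
    rw [Real.norm_of_nonneg hu.1.le]
    exact hu.2.le

lemma integrable_dist_betaMeasure {μ : ℝ} (hμ : μ ∈ Ioo (0 : ℝ) 1) (c : ℝ) :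
    Integrable (dist · c) (betaMeasure μ) := by
  have := isProbabilityMeasure_betaMeasure hμ
  simpa only [dist_eq_norm, Pi.sub_apply] using
    ((integrable_id_betaMeasure hμ).sub (integrable_const c)).norm

lemma integral_dist_zero_betaMeasure {μ : ℝ} (hμ : μ ∈ Ioo (0 : ℝ) 1) :
    ∫ u, dist u 0 ∂betaMeasure μ = μ := by
  refine .trans (integral_congr_ae ?_) (integral_id_betaMeasure hμ)
  filter_upwards [ae_mem_Ioo_betaMeasure μ] with u hu
  rw [Real.dist_0_eq_abs, abs_of_pos hu.1]

lemma integral_dist_one_betaMeasure {μ : ℝ} (hμ : μ ∈ Ioo (0 : ℝ) 1) :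
    ∫ u, dist u 1 ∂betaMeasure μ = 1 - μ := by
  have := isProbabilityMeasure_betaMeasure hμ
  have hdist : ∫ u, dist u 1 ∂betaMeasure μ = ∫ u, (1 - u) ∂betaMeasure μ :=
    integral_congr_ae <| (ae_mem_Ioo_betaMeasure μ).mono fun u hu => by
      simp only [Real.dist_eq, abs_sub_comm u, abs_of_pos (sub_pos.2 hu.2)]
  rw [hdist, integral_sub (integrable_const 1) (integrable_id_betaMeasure hμ), integral_const,
    probReal_univ, one_smul, integral_id_betaMeasure hμ]

/-- Indexed by `Ioo 0 1` so as to be a family of probability measures; on this index type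
`comap Subtype.val (𝓝 c)` plays the role of `𝓝[Ioo 0 1] c`. -/
noncomputable def betaProba (μ : Ioo (0 : ℝ) 1) : ProbabilityMeasure ℝ :=
  ⟨betaMeasure μ, isProbabilityMeasure_betaMeasure μ.2⟩

lemma tendsto_betaProba_zero :
    Tendsto betaProba (comap Subtype.val (𝓝 0)) (𝓝 (diracProba 0)) :=
  tendsto_diracProba_of_tendsto_integral_dist (integrable_dist_betaMeasure ·.2 0) <| by
    simpa only [betaProba, ProbabilityMeasure.coe_mk, integral_dist_zero_betaMeasure,
      Subtype.coe_prop] using tendsto_comap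

lemma tendsto_betaProba_one :
    Tendsto betaProba (comap Subtype.val (𝓝 1)) (𝓝 (diracProba 1)) :=
  tendsto_diracProba_of_tendsto_integral_dist (integrable_dist_betaMeasure ·.2 1) <| by
    simpa only [betaProba, ProbabilityMeasure.coe_mk, integral_dist_one_betaMeasure,
      Subtype.coe_prop, sub_self] using
      (tendsto_const_nhds (x := (1 : ℝ))).sub
        (tendsto_comap (f := (Subtype.val : Ioo (0 : ℝ) 1 → ℝ)) (x := 𝓝 1))

lemma chiSqMeasure_eq_gammaMeasure (k : ℝ) :
    chiSqMeasure k = ProbabilityTheory.gammaMeasure (k / 2) (1 / 2) := by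
  refine withDensity_congr_ae ?_
  filter_upwards [compl_mem_ae_iff.mpr (measure_singleton (0 : ℝ))] with v (hv : v ≠ 0)
  rw [ProbabilityTheory.gammaPDF_eq, chiSqDensity]
  rcases hv.lt_or_gt with hv | hv
  · rw [if_neg hv.not_gt, if_neg hv.not_ge]
  · rw [if_pos hv, if_pos hv.le, Real.div_rpow zero_le_one zero_le_two, Real.one_rpow]
    field_simp

lemma isProbabilityMeasure_chiSqMeasure {k : ℝ} (hk : 0 < k) :
    IsProbabilityMeasure (chiSqMeasure k) := by
  rw [chiSqMeasure_eq_gammaMeasure]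
  exact ProbabilityTheory.isProbabilityMeasure_gammaMeasure (half_pos hk) one_half_pos

noncomputable def chiDensity (k x : ℝ) : ℝ :=
  if 0 < x then x ^ (k - 1) * Real.exp (-(x ^ 2) / 2) / ((2 : ℝ) ^ (k / 2 - 1) * Real.Gamma (k / 2))
  else 0

lemma chiMeasure_eq_withDensity (k : ℝ) :
    chiMeasure k = volume.withDensity (fun x => ENNReal.ofReal (chiDensity k x)) :=
  rfl

lemma chiDensity_eq_mul_chiSqDensity (k : ℝ) {x : ℝ} (hx : 0 < x) :
    chiDensity k x = (2 * x ^ ((2 : ℝ) - 1)) * chiSqDensity k (x ^ (2 : ℝ)) := by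
  have hx2 : 0 < x ^ (2 : ℝ) := by positivity
  have hk1 : x ^ (k - 1) = x * x ^ (2 * (k / 2 - 1)) := by
    rw [show k - 1 = 1 + 2 * (k / 2 - 1) by ring, Real.rpow_add hx, Real.rpow_one]
  rw [chiDensity, chiSqDensity, if_pos hx, if_pos hx2, ← Real.rpow_mul hx.le, Real.rpow_two,
    Real.rpow_sub_one two_ne_zero, hk1]
  norm_num
  field_simp

lemma chiSqDensity_nonneg {k : ℝ} (hk : 0 < k) (v : ℝ) : 0 ≤ chiSqDensity k v := by
  have := Real.Gamma_pos_of_pos (half_pos hk)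
  unfold chiSqDensity
  split_ifs <;> positivity

lemma chiDensity_nonneg {k : ℝ} (hk : 0 < k) (x : ℝ) : 0 ≤ chiDensity k x := by
  have := Real.Gamma_pos_of_pos (half_pos hk)
  unfold chiDensity
  split_ifs <;> positivity

lemma measurable_chiSqDensity (k : ℝ) : Measurable (chiSqDensity k) :=
  Measurable.ite measurableSet_Ioi (by fun_prop) (by fun_prop)

lemma measurable_chiDensity (k : ℝ) : Measurable (chiDensity k) :=
  Measurable.ite measurableSet_Ioi (by fun_prop) (by fun_prop)

lemma integral_chiSqMeasure {k : ℝ} (hk : 0 < k) (g : ℝ → ℝ) :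
    ∫ v, g v ∂chiSqMeasure k = ∫ v in Ioi 0, chiSqDensity k v * g v := by
  rw [chiSqMeasure, integral_withDensity_ofReal (measurable_chiSqDensity k)
    (chiSqDensity_nonneg hk)]
  refine (setIntegral_eq_integral_of_forall_compl_eq_zero fun v hv => ?_).symm
  rw [chiSqDensity, if_neg (show ¬0 < v from hv), zero_mul]

lemma integral_chiMeasure {k : ℝ} (hk : 0 < k) (f : ℝ → ℝ) :
    ∫ x, f x ∂chiMeasure k = ∫ v, f (√v) ∂chiSqMeasure k := by
  have hchi : ∫ x, f x ∂chiMeasure k = ∫ x in Ioi 0, chiDensity k x * f x := by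
    rw [chiMeasure_eq_withDensity,
      integral_withDensity_ofReal (measurable_chiDensity k) (chiDensity_nonneg hk)]
    refine (setIntegral_eq_integral_of_forall_compl_eq_zero fun x hx => ?_).symm
    rw [chiDensity, if_neg (show ¬0 < x from hx), zero_mul]
  rw [hchi, integral_chiSqMeasure hk, ← integral_comp_rpow_Ioi_of_pos two_pos
    (g := fun v => chiSqDensity k v * f √v)]
  refine setIntegral_congr_fun measurableSet_Ioi fun x (hx : 0 < x) => ?_
  rw [chiDensity_eq_mul_chiSqDensity k hx, smul_eq_mul, Real.rpow_two, Real.sqrt_sq hx.le]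
  ring

lemma tendsto_integral_PGN {k c : ℝ} (hk : 0 < k)
    (hβ : Tendsto betaProba (comap Subtype.val (𝓝 c)) (𝓝 (diracProba c))) (f : ℝ →ᵇ ℝ) :
    Tendsto (fun μ => ∫ x, f x ∂PGN μ k) (𝓝[Ioo 0 1] c)
      (𝓝 (∫ v, f (√v * Real.cos (π * c)) ∂chiSqMeasure k)) := by
  let χ : ProbabilityMeasure ℝ := ⟨chiSqMeasure k, isProbabilityMeasure_chiSqMeasure hk⟩
  have hT : Continuous fun p : ℝ × ℝ => √p.1 * Real.cos (π * p.2) := by fun_prop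
  have hprod : Tendsto (fun μ => (χ.prod (betaProba μ)).map hT.measurable.aemeasurable)
      (comap Subtype.val (𝓝 c)) (𝓝 ((χ.prod (diracProba c)).map hT.measurable.aemeasurable)) :=
    ((ProbabilityMeasure.continuous_map hT).tendsto _).comp
      ((ProbabilityMeasure.continuous_prod.tendsto _).comp (tendsto_const_nhds.prodMk_nhds hβ))
  have hlim : ∫ x, f x ∂((χ.prod (diracProba c)).map hT.measurable.aemeasurable : Measure ℝ)
      = ∫ v, f (√v * Real.cos (π * c)) ∂chiSqMeasure k := by
    rw [ProbabilityMeasure.toMeasure_map, ProbabilityMeasure.toMeasure_prod,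
      integral_map hT.measurable.aemeasurable f.continuous.aestronglyMeasurable]
    change ∫ p, f (√p.1 * Real.cos (π * p.2)) ∂(chiSqMeasure k).prod (Measure.dirac c) = _
    have := isProbabilityMeasure_chiSqMeasure hk
    rw [Measure.prod_dirac, integral_map (φ := fun x => (x, c)) (by fun_prop)
      (by exact (f.continuous.comp hT).aestronglyMeasurable)]
  rw [nhdsWithin, ← subtype_coe_map_comap, tendsto_map'_iff, ← hlim]
  exact ProbabilityMeasure.tendsto_iff_forall_integral_tendsto.1 hprod f

theorem stmt7 (k : ℝ) (hk : 0 < k) :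
    (∀ f : BoundedContinuousFunction ℝ ℝ,
      Filter.Tendsto (fun μ : ℝ => ∫ x, f x ∂(PGN μ k))
        (nhdsWithin 0 (Set.Ioo (0:ℝ) 1))
        (nhds (∫ x, f x ∂(chiMeasure k)))) ∧
    (∀ f : BoundedContinuousFunction ℝ ℝ,
      Filter.Tendsto (fun μ : ℝ => ∫ x, f x ∂(PGN μ k))
        (nhdsWithin 1 (Set.Ioo (0:ℝ) 1))
        (nhds (∫ x, f x ∂(Measure.map (fun x : ℝ => -x) (chiMeasure k))))) := by
  refine ⟨fun f => ?_, fun f => ?_⟩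
  · simpa only [integral_chiMeasure hk, mul_zero, Real.cos_zero, mul_one] using
      tendsto_integral_PGN hk tendsto_betaProba_zero f
  · rw [integral_map measurable_neg.aemeasurable f.continuous.aestronglyMeasurable,
      integral_chiMeasure hk (fun x => f (-x))]
    simpa only [mul_one, Real.cos_pi, mul_neg] using
      tendsto_integral_PGN hk tendsto_betaProba_one f
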